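/- arXiv:2208.13273 — 2 statements merged into one kernel-verified Lean document; each statement's English description precedes it below -/
import Mathlib

section
/- If the symmetric matrix A = K - cI (K the 1D discrete Laplacian, c > 0 with 4sin²(π/(2n)) < c < 4sin²(π(n-1)/(2n))), then the undamped Jacobi amplification matrix G = I - D⁻¹A, where D = (2-c)I, has an eigenvalue of modulus greater than 1, so the Jacobi iteration diverges for generic initial errors. -/
/-!
The vector `v i = sin ((i + 1) π / n)` vanishes at both padded ends `i = -1, n - 1`, so the
addition formula for `sin` makes it an eigenvector of the Dirichlet Laplacian `K` with eigenvalue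
`λ = 4 sin² (π / 2n)`. Since `A` and `D` are polynomials in `K`, it is also an eigenvector of `G`,
with eigenvalue `1 - (λ - c) / (2 - c)`, which exceeds `1` because `λ < c < 2`; hence
`‖G ^ m v‖ = μ ^ m ‖v‖` grows without bound.
-/

open Matrix Filter Real

def discreteLaplacian (R : Type*) [Ring R] (m : ℕ) : Matrix (Fin m) (Fin m) R :=
  of fun i j => if i = j then 2 else if (i : ℕ) + 1 = j ∨ (j : ℕ) + 1 = i then -1 else 0

section Laplacian

variable {R : Type*} [CommRing R] {m : ℕ}

theorem discreteLaplacian_apply (i j : Fin m) :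
    discreteLaplacian R m i j =
      2 * (if (j : ℕ) + 1 = i + 1 then 1 else 0) - (if (j : ℕ) + 1 = i + 2 then 1 else 0)
        - (if (j : ℕ) + 1 = i then 1 else 0) := by
  simp only [discreteLaplacian, of_apply, Fin.ext_iff]
  split_ifs <;> first | omega | ring

/-- `w` is the vector padded with zeros at the indices `0` and `m + 1`. -/
theorem discreteLaplacian_mulVec_of_boundary {w : ℕ → R} (h0 : w 0 = 0) (hm : w (m + 1) = 0) :
    discreteLaplacian R m *ᵥ (fun i => w (i + 1)) =
      fun i : Fin m => 2 * w (i + 1) - w i - w (i + 2) := by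
  funext i
  let g : ℕ → R := fun k =>
    (2 * (if k = i + 1 then 1 else 0) - (if k = i + 2 then 1 else 0)
      - (if k = i then 1 else 0)) * w k
  have hpad : ∑ j : Fin m, discreteLaplacian R m i j * w (j + 1) =
      ∑ k ∈ Finset.range (m + 2), g k := by
    rw [Finset.sum_range_succ, Finset.sum_range_succ',
      ← Fin.sum_univ_eq_sum_range (fun j => g (j + 1))]
    simp [g, h0, hm, discreteLaplacian_apply]
  simp only [mulVec, dotProduct, hpad, g, sub_mul, Finset.sum_sub_distrib, mul_assoc,
    ← Finset.mul_sum, ite_mul, one_mul, zero_mul, Finset.sum_ite_eq', Finset.mem_range]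
  simp only [show (i : ℕ) < m + 2 by omega, show (i : ℕ) + 1 < m + 2 by omega,
    show (i : ℕ) + 2 < m + 2 by omega, if_true]
  ring

end Laplacian

theorem discreteLaplacian_mulVec_sin {m : ℕ} {t : ℝ} (ht : sin ((m + 1) * t) = 0) :
    discreteLaplacian ℝ m *ᵥ (fun i : Fin m => sin ((i + 1) * t)) =
      (4 * sin (t / 2) ^ 2) • fun i : Fin m => sin ((i + 1) * t) := by
  have hw := discreteLaplacian_mulVec_of_boundary (R := ℝ) (m := m) (w := fun k => sin (k * t))
    (by simp) (by push_cast; exact ht)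
  push_cast at hw
  rw [hw]
  funext i
  have hcos : 4 * sin (t / 2) ^ 2 = 2 - 2 * cos t := by
    rw [sin_sq_eq_half_sub, mul_div_cancel₀ t two_ne_zero]; ring
  have hprev : (i : ℝ) * t = (i + 1) * t - t := by ring
  have hnext : ((i : ℝ) + 2) * t = (i + 1) * t + t := by ring
  simp only [Pi.smul_apply, smul_eq_mul, hcos, hprev, hnext, sin_sub, sin_add]
  ring

section Jacobi

variable {ι 𝕜 : Type*} [Fintype ι] [DecidableEq ι] [Field 𝕜]

noncomputable def jacobiMatrix (D A : Matrix ι ι 𝕜) : Matrix ι ι 𝕜 := 1 - D⁻¹ * A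

theorem jacobiMatrix_smul_one_mulVec {K : Matrix ι ι 𝕜} {v : ι → 𝕜} {lam c d : 𝕜}
    (hd : d ≠ 0) (hKv : K *ᵥ v = lam • v) :
    jacobiMatrix (d • 1) (K - c • 1) *ᵥ v = (1 - (lam - c) / d) • v := by
  have hinv : (d • (1 : Matrix ι ι 𝕜))⁻¹ = d⁻¹ • 1 :=
    inv_eq_right_inv (by rw [smul_mul_smul_comm, mul_one, mul_inv_cancel₀ hd, one_smul])
  rw [jacobiMatrix, hinv, smul_mul, one_mul, sub_mulVec, smul_mulVec, sub_mulVec, hKv,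
    smul_mulVec, one_mulVec, ← sub_smul, smul_smul, sub_smul, one_smul, div_eq_inv_mul]

end Jacobi

theorem pow_mulVec_of_mulVec_eq_smul {ι R : Type*} [Fintype ι] [DecidableEq ι] [CommSemiring R]
    {G : Matrix ι ι R} {v : ι → R} {μ : R} (h : G *ᵥ v = μ • v) (k : ℕ) :
    (G ^ k) *ᵥ v = μ ^ k • v := by
  induction k with
  | zero => simp
  | succ k ih => rw [pow_succ', ← mulVec_mulVec, ih, mulVec_smul, h, smul_smul, ← pow_succ]

theorem tendsto_norm_pow_mulVec_atTop {ι 𝕜 : Type*} [Fintype ι] [DecidableEq ι] [NormedField 𝕜]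
    {G : Matrix ι ι 𝕜} {v : ι → 𝕜} {μ : 𝕜} (hv : v ≠ 0) (h : G *ᵥ v = μ • v) (hμ : 1 < ‖μ‖) :
    Tendsto (fun k => ‖(G ^ k) *ᵥ v‖) atTop atTop := by
  simp only [pow_mulVec_of_mulVec_eq_smul h, norm_smul, norm_pow]
  exact (tendsto_pow_atTop_atTop_of_one_lt hμ).atTop_mul_const (norm_pos_iff.mpr hv)

theorem stmt14_general {n : ℕ} (hn : 2 ≤ n) (c : ℝ) (hc2 : c < 2)
    (hc : 4 * Real.sin (Real.pi / (2 * n)) ^ 2 < c)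
    (K A D G : Matrix (Fin (n - 1)) (Fin (n - 1)) ℝ)
    (hK : ∀ i j, K i j = if i = j then 2
      else if (i : ℕ) + 1 = (j : ℕ) ∨ (j : ℕ) + 1 = (i : ℕ) then -1 else 0)
    (hA : A = K - c • 1) (hD : D = (2 - c) • 1) (hG : G = 1 - D⁻¹ * A) :
    ∃ (μ : ℝ) (v : Fin (n - 1) → ℝ), v ≠ 0 ∧ G.mulVec v = μ • v ∧ 1 < |μ| ∧
      Filter.Tendsto (fun m => ‖(G ^ m).mulVec v‖) Filter.atTop Filter.atTop := by
  have hn1 : (1 : ℝ) < n := by exact_mod_cast hn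
  set t := π / n with ht
  set v : Fin (n - 1) → ℝ := fun i => sin ((i + 1) * t)
  have hK' : K = discreteLaplacian ℝ (n - 1) := by ext i j; rw [hK]; rfl
  have hsin : sin (((n - 1 : ℕ) + 1) * t) = 0 := by
    rw [Nat.cast_sub (by omega), Nat.cast_one, sub_add_cancel, ht,
      mul_div_cancel₀ _ (by positivity), sin_pi]
  have hv : v ≠ 0 := fun h => by
    have h0 := congrFun h ⟨0, by omega⟩
    simp only [v, Nat.cast_zero, zero_add, one_mul, Pi.zero_apply] at h0
    exact (sin_pos_of_pos_of_lt_pi (by positivity) (div_lt_self pi_pos hn1)).ne' h0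
  have hGv : G *ᵥ v = (1 - (4 * sin (t / 2) ^ 2 - c) / (2 - c)) • v := by
    rw [hG, hD, hA, hK']
    exact jacobiMatrix_smul_one_mulVec (by linarith) (discreteLaplacian_mulVec_sin hsin)
  have hμ : 1 < |1 - (4 * sin (t / 2) ^ 2 - c) / (2 - c)| := by
    have hhalf : t / 2 = π / (2 * n) := by rw [ht]; ring
    have hneg : (4 * sin (t / 2) ^ 2 - c) / (2 - c) < 0 :=
      div_neg_of_neg_of_pos (by rwa [hhalf, sub_neg]) (by linarith)
    exact lt_abs.mpr (Or.inl (by linarith))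
  exact ⟨_, v, hv, hGv, hμ, tendsto_norm_pow_mulVec_atTop hv hGv hμ⟩

theorem stmt14 {n : ℕ} (hn : 2 ≤ n) (c : ℝ) (hc0 : 0 < c) (hc2 : c < 2)
    (hc : 4 * Real.sin (Real.pi / (2 * n)) ^ 2 < c)
    (K A D G : Matrix (Fin (n - 1)) (Fin (n - 1)) ℝ)
    (hK : ∀ i j, K i j = if i = j then 2
      else if (i : ℕ) + 1 = (j : ℕ) ∨ (j : ℕ) + 1 = (i : ℕ) then -1 else 0)
    (hA : A = K - c • 1) (hD : D = (2 - c) • 1) (hG : G = 1 - D⁻¹ * A) :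
    ∃ (μ : ℝ) (v : Fin (n - 1) → ℝ), v ≠ 0 ∧ G.mulVec v = μ • v ∧ 1 < |μ| ∧
      Filter.Tendsto (fun m => ‖(G ^ m).mulVec v‖) Filter.atTop Filter.atTop :=
  stmt14_general hn c hc2 hc K A D G hK hA hD hG
end

section
/- If A ∈ ℝ^{n×n} is symmetric positive definite, then the Gauss–Seidel iteration converges: the spectral radius of -(L+D)⁻¹U is strictly less than 1. -/
/-!
Gauss–Seidel is the splitting `A = M - N` with `M = L + D` and `N = -U`, for which
`Mᴴ + N = Lᵀ + D - U = D` is positive definite. This is all the Ostrowski–Reich argument needs: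
if `M⁻¹ N x = μ x` with `x ≠ 0` and `m = x* M x`, then `p = x* A x = (1 - μ) m` is real and
positive and `x* (Mᴴ + N) x = conj m + μ m` has real part `2 re m - p > 0`, so
`‖m‖² - ‖μ m‖² = ‖m‖² - ‖m - p‖² = p (2 re m - p) > 0`. The same positivity for
`M + Mᴴ = A + D` shows that `L + D` is invertible.
-/

open scoped ComplexOrder

namespace RCLike

variable {𝕜 : Type*} [RCLike 𝕜]

lemma norm_lt_one_of_one_sub_mul_pos_of_star_add_mul_pos {μ m : 𝕜}
    (hp : 0 < (1 - μ) * m) (hq : 0 < star m + μ * m) : ‖μ‖ < 1 := by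
  rw [pos_iff] at hp hq
  simp only [mul_re, mul_im, map_sub, map_add, one_re, one_im, star_def, conj_re,
    conj_im] at hp hq
  obtain ⟨hp_re, hp_im⟩ := hp
  -- Since `(1 - μ) * m` is real, `re ((1 - μ) * m) * re (star m + μ * m) = ‖m‖ ^ 2 * (1 - ‖μ‖ ^ 2)`.
  have hsq : ‖μ‖ ^ 2 < 1 := by
    rw [norm_sq_eq_def]
    by_contra! h
    nlinarith [mul_pos hp_re hq.1, mul_nonneg (add_nonneg (sq_nonneg (re m)) (sq_nonneg (im m)))
      (sub_nonneg.2 h), congrArg (· * (im μ * re m + re μ * im m + im m)) hp_im]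
  exact (pow_lt_one_iff_of_nonneg (norm_nonneg μ) two_ne_zero).1 hsq

end RCLike

namespace Matrix

variable {n : Type*} [Fintype n]

lemma exists_mulVec_eq_smul_of_mem_spectrum {K : Type*} [Field K] [DecidableEq n]
    {M : Matrix n n K} {μ : K} (hμ : μ ∈ spectrum K M) : ∃ x ≠ 0, M *ᵥ x = μ • x := by
  rw [← spectrum_toLin', ← Module.End.hasEigenvalue_iff_mem_spectrum] at hμ
  obtain ⟨x, hx⟩ := hμ.exists_hasEigenvector
  exact ⟨x, hx.2, by simpa using hx.apply_eq_smul⟩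

lemma star_dotProduct_conjTranspose_mulVec {R : Type*} [CommSemiring R] [StarRing R]
    (M : Matrix n n R) (x : n → R) :
    star x ⬝ᵥ (Mᴴ *ᵥ x) = star (star x ⬝ᵥ (M *ᵥ x)) := by
  rw [star_dotProduct, star_mulVec, conjTranspose_conjTranspose, dotProduct_mulVec]

lemma isUnit_det_of_posDef_add_conjTranspose {K : Type*} [Field K] [PartialOrder K]
    [StarRing K] [DecidableEq n] {M : Matrix n n K} (hM : (M + Mᴴ).PosDef) : IsUnit M.det := by
  rw [isUnit_iff_ne_zero, ne_eq, ← exists_mulVec_eq_zero_iff]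
  rintro ⟨x, hx, hMx⟩
  have := hM.dotProduct_mulVec_pos hx
  rw [add_mulVec, dotProduct_add, star_dotProduct_conjTranspose_mulVec, hMx] at this
  simp at this

lemma re_star_dotProduct_map_algebraMap_mulVec {𝕜 : Type*} [RCLike 𝕜] (A : Matrix n n ℝ)
    (x : n → 𝕜) :
    RCLike.re (star x ⬝ᵥ (A.map (algebraMap ℝ 𝕜) *ᵥ x)) =
      (fun i ↦ RCLike.re (x i)) ⬝ᵥ (A *ᵥ fun i ↦ RCLike.re (x i)) +
      (fun i ↦ RCLike.im (x i)) ⬝ᵥ (A *ᵥ fun i ↦ RCLike.im (x i)) := by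
  simp only [dotProduct, mulVec, map_apply, Pi.star_apply, map_sum, ← Finset.sum_add_distrib,
    Finset.mul_sum]
  refine Finset.sum_congr rfl fun i _ ↦ Finset.sum_congr rfl fun j _ ↦ ?_
  simp [RCLike.mul_re, RCLike.mul_im, RCLike.algebraMap_eq_ofReal]

lemma PosDef.map_algebraMap {𝕜 : Type*} [RCLike 𝕜] {A : Matrix n n ℝ} (hA : A.PosDef) :
    (A.map (algebraMap ℝ 𝕜)).PosDef := by
  have hH : (A.map (algebraMap ℝ 𝕜)).IsHermitian :=
    hA.isHermitian.map _ fun r ↦ by simp [RCLike.algebraMap_eq_ofReal]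
  refine .of_dotProduct_mulVec_pos hH fun x hx ↦ RCLike.pos_iff.2 ⟨?_, ?_⟩
  · have hpos (y : n → ℝ) (hy : y ≠ 0) : 0 < y ⬝ᵥ (A *ᵥ y) := by
      simpa using hA.dotProduct_mulVec_pos hy
    have hnonneg (y : n → ℝ) : 0 ≤ y ⬝ᵥ (A *ᵥ y) := by
      simpa using hA.posSemidef.dotProduct_mulVec_nonneg y
    have hre_or_im : (fun i ↦ RCLike.re (x i)) ≠ 0 ∨ (fun i ↦ RCLike.im (x i)) ≠ 0 := by
      contrapose! hx
      exact funext fun i ↦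
        RCLike.ext (by simpa using congrFun hx.1 i) (by simpa using congrFun hx.2 i)
    rw [re_star_dotProduct_map_algebraMap_mulVec]
    rcases hre_or_im with h | h
    · exact add_pos_of_pos_of_nonneg (hpos _ h) (hnonneg _)
    · exact add_pos_of_nonneg_of_pos (hnonneg _) (hpos _ h)
  · rw [← RCLike.conj_eq_iff_im, ← RCLike.star_def, ← star_dotProduct_conjTranspose_mulVec,
      hH.eq]

theorem norm_lt_one_of_mem_spectrum_of_mul_eq {𝕜 : Type*} [RCLike 𝕜] [DecidableEq n]
    {M N G : Matrix n n 𝕜} (hG : M * G = N) (hA : (M - N).PosDef) (hB : (Mᴴ + N).PosDef)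
    {μ : 𝕜} (hμ : μ ∈ spectrum 𝕜 G) : ‖μ‖ < 1 := by
  obtain ⟨x, hx, hGx⟩ := exists_mulVec_eq_smul_of_mem_spectrum hμ
  have hNx : N *ᵥ x = μ • M *ᵥ x := by
    rw [← hG, ← mulVec_mulVec, hGx, mulVec_smul]
  have hp := hA.dotProduct_mulVec_pos hx
  have hq := hB.dotProduct_mulVec_pos hx
  rw [sub_mulVec, hNx, dotProduct_sub, dotProduct_smul, smul_eq_mul, ← one_sub_mul] at hp
  rw [add_mulVec, hNx, dotProduct_add, dotProduct_smul, smul_eq_mul,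
    star_dotProduct_conjTranspose_mulVec] at hq
  exact RCLike.norm_lt_one_of_one_sub_mul_pos_of_star_add_mul_pos hp hq

theorem norm_lt_one_of_mem_spectrum_map_of_mul_eq {𝕜 : Type*} [RCLike 𝕜] [DecidableEq n]
    {M N G : Matrix n n ℝ} (hG : M * G = N) (hA : (M - N).PosDef) (hB : (Mᵀ + N).PosDef)
    {μ : 𝕜} (hμ : μ ∈ spectrum 𝕜 (G.map (algebraMap ℝ 𝕜))) : ‖μ‖ < 1 := by
  refine norm_lt_one_of_mem_spectrum_of_mul_eq (M := M.map (algebraMap ℝ 𝕜))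
    (N := N.map (algebraMap ℝ 𝕜)) ?_ ?_ ?_ hμ
  · rw [← Matrix.map_mul, hG]
  · convert hA.map_algebraMap (𝕜 := 𝕜) using 1
    ext; simp
  · convert hB.map_algebraMap (𝕜 := 𝕜) using 1
    ext; simp [RCLike.algebraMap_eq_ofReal]

section Splitting

variable {n α : Type*} [LinearOrder n]

def strictLowerPart [Zero α] (A : Matrix n n α) : Matrix n n α :=
  of fun i j ↦ if j < i then A i j else 0

def strictUpperPart [Zero α] (A : Matrix n n α) : Matrix n n α :=
  of fun i j ↦ if i < j then A i j else 0

lemma strictLowerPart_add_diagonal_diag_add_strictUpperPart [AddZeroClass α]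
    (A : Matrix n n α) : strictLowerPart A + diagonal A.diag + strictUpperPart A = A := by
  ext i j
  rcases lt_trichotomy i j with h | rfl | h
  · simp [strictLowerPart, strictUpperPart, h, h.ne, h.not_gt]
  · simp [strictLowerPart, strictUpperPart]
  · simp [strictLowerPart, strictUpperPart, h, h.ne', h.not_gt]

lemma IsSymm.strictUpperPart_eq_transpose [Zero α] {A : Matrix n n α} (hA : A.IsSymm) :
    strictUpperPart A = (strictLowerPart A)ᵀ := by
  ext i j
  simp [strictLowerPart, strictUpperPart, hA.apply i j]

end Splitting

end Matrix

open Matrix in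
theorem stmt16 {n : ℕ} (A : Matrix (Fin n) (Fin n) ℝ) (hA : A.PosDef)
    (L D U : Matrix (Fin n) (Fin n) ℝ)
    (hL : L = Matrix.of fun i j => if j < i then A i j else 0)
    (hD : D = Matrix.diagonal fun i => A i i)
    (hU : U = Matrix.of fun i j => if i < j then A i j else 0) :
    ∀ μ ∈ spectrum ℂ ((-((L + D)⁻¹ * U)).map (algebraMap ℝ ℂ)), ‖μ‖ < 1 := by
  obtain rfl : L = strictLowerPart A := hL
  obtain rfl : D = diagonal A.diag := hD
  obtain rfl : U = strictUpperPart A := hU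
  have hsplit := strictLowerPart_add_diagonal_diag_add_strictUpperPart A
  have hUL := (isHermitian_iff_isSymm.1 hA.isHermitian).strictUpperPart_eq_transpose
  have hDpos : (diagonal A.diag).PosDef := posDef_diagonal_iff.2 fun _ ↦ hA.diag_pos
  have hdet : IsUnit (strictLowerPart A + diagonal A.diag).det := by
    refine isUnit_det_of_posDef_add_conjTranspose ?_
    rw [conjTranspose_eq_transpose_of_trivial, transpose_add, diagonal_transpose, ← hUL,
      ← add_assoc, hsplit]
    exact hA.add hDpos
  intro μ hμ
  refine norm_lt_one_of_mem_spectrum_map_of_mul_eq (M := strictLowerPart A + diagonal A.diag)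
    (N := -strictUpperPart A) ?_ ?_ ?_ hμ
  · rw [mul_neg, mul_nonsing_inv_cancel_left _ _ hdet]
  · rwa [sub_neg_eq_add, hsplit]
  · convert hDpos using 1
    rw [transpose_add, diagonal_transpose, ← hUL]
    abel
end
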